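/- Let A be a 2×2 real symmetric positive-definite matrix satisfying the Cordes condition |A|²/(Tr A)² ≤ 1/(1+ε) for some ε ∈ (0,1), and set γ := Tr A / |A|². Then for every symmetric 2×2 real matrix M, |γ (A : M) − Tr M| ≤ √(1−ε) · |M|, where A : M denotes the Frobenius inner product and |M| the Frobenius norm. -/

import Mathlib

/-!
With `γ = Tr A / |A|²` and `B = γ A - I`, the quantity `γ (A : M) - Tr M` is the Frobenius
pairing `B : M`, and `|B|² = γ² |A|² - 2 γ Tr A + n = n - (Tr A)² / |A|²`. In dimension `n` the
Cordes condition `|A|² / (Tr A)² ≤ 1 / (n - 1 + ε)` says exactly that this is at most `1 - ε`,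
so the estimate is the Cauchy–Schwarz inequality for the Frobenius pairing.
-/

open Matrix

variable {m n : Type*} [Fintype m] [Fintype n]

theorem abs_sum_sum_mul_le_sqrt_mul_sqrt (B M : Matrix m n ℝ) :
    |∑ i, ∑ j, B i j * M i j| ≤ √(∑ i, ∑ j, B i j ^ 2) * √(∑ i, ∑ j, M i j ^ 2) := by
  simp only [← Fintype.sum_prod_type']
  rw [← Real.sqrt_mul (Finset.sum_nonneg fun _ _ => sq_nonneg _)]
  exact Real.abs_le_sqrt (Finset.sum_mul_sq_le_sq_mul_sq _ _ _)

theorem sum_sum_sq_pos_of_trace_ne_zero {A : Matrix n n ℝ} (hA : A.trace ≠ 0) :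
    0 < ∑ i, ∑ j, A i j ^ 2 := by
  have hrow : 0 ≤ fun i => ∑ j, A i j ^ 2 := fun i => Finset.sum_nonneg fun j _ => sq_nonneg (A i j)
  refine (Finset.sum_nonneg fun i _ => hrow i).lt_of_ne' fun h => hA ?_
  simp only [Fintype.sum_eq_zero_iff_of_nonneg hrow, funext_iff, Pi.zero_apply,
    Fintype.sum_eq_zero_iff_of_nonneg fun _ => sq_nonneg _, pow_eq_zero_iff two_ne_zero] at h
  exact Finset.sum_eq_zero fun i _ => h i i

section Renormalization

variable [DecidableEq n] (A M : Matrix n n ℝ) (c : ℝ)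

theorem sum_sum_smul_sub_one_mul :
    ∑ i, ∑ j, (c • A - 1) i j * M i j = c * ∑ i, ∑ j, A i j * M i j - M.trace := by
  simp [sub_mul, one_apply, ite_mul, Finset.sum_sub_distrib, Finset.mul_sum, mul_assoc, trace]

theorem sum_sum_smul_sub_one_sq :
    ∑ i, ∑ j, (c • A - 1) i j ^ 2
      = c ^ 2 * ∑ i, ∑ j, A i j ^ 2 - 2 * c * A.trace + Fintype.card n := by
  simp [sub_sq, one_apply, Finset.sum_add_distrib, Finset.sum_sub_distrib, Finset.mul_sum,
    mul_pow, mul_assoc, trace]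

variable {A} in
theorem sum_sum_sq_renormalized_le_of_cordes {ε : ℝ} (hA : A.trace ≠ 0)
    (hCordes : (∑ i, ∑ j, A i j ^ 2) / A.trace ^ 2 ≤ 1 / (Fintype.card n - 1 + ε)) :
    ∑ i, ∑ j, ((A.trace / ∑ i, ∑ j, A i j ^ 2) • A - 1) i j ^ 2 ≤ 1 - ε := by
  set a := ∑ i, ∑ j, A i j ^ 2
  set t := A.trace
  have ha : 0 < a := sum_sum_sq_pos_of_trace_ne_zero hA
  have hcordes : Fintype.card n - 1 + ε ≤ t ^ 2 / a := by
    simpa only [one_div_one_div, one_div_div, div_one] using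
      one_div_le_one_div_of_le (by positivity) hCordes
  have hnormSq : (t / a) ^ 2 * a - 2 * (t / a) * t = -(t ^ 2 / a) := by
    field_simp
    ring
  rw [sum_sum_smul_sub_one_sq]
  linarith

end Renormalization

theorem cordes_renormalization_estimate_general
    (A : Matrix (Fin 2) (Fin 2) ℝ) (ε : ℝ)
    (hpos : A.PosDef)
    (hCordes : (∑ i, ∑ j, (A i j) ^ 2) / (A.trace) ^ 2 ≤ 1 / (1 + ε)) :
    ∀ M : Matrix (Fin 2) (Fin 2) ℝ, M.IsSymm →
      |(A.trace / ∑ i, ∑ j, (A i j) ^ 2) * (∑ i, ∑ j, A i j * M i j) - M.trace|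
        ≤ Real.sqrt (1 - ε) * Real.sqrt (∑ i, ∑ j, (M i j) ^ 2) := by
  intro M _
  rw [← sum_sum_smul_sub_one_mul]
  refine (abs_sum_sum_mul_le_sqrt_mul_sqrt _ M).trans ?_
  gcongr
  refine sum_sum_sq_renormalized_le_of_cordes hpos.trace_pos.ne' ?_
  convert hCordes using 3
  norm_num

/-- pointwise Cordes renormalization estimate: if the symmetric
positive-definite 2×2 matrix `A` satisfies the Cordes condition with parameter `ε`,
and `γ = Tr A / |A|²`, then for every symmetric `M`,
`|γ (A : M) − Tr M| ≤ √(1−ε) |M|` (Frobenius inner product and norm). -/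
theorem cordes_renormalization_estimate
    (A : Matrix (Fin 2) (Fin 2) ℝ) (ε : ℝ)
    (hA : A.IsSymm) (hpos : A.PosDef) (hε : ε ∈ Set.Ioo (0 : ℝ) 1)
    (hCordes : (∑ i, ∑ j, (A i j) ^ 2) / (A.trace) ^ 2 ≤ 1 / (1 + ε)) :
    ∀ M : Matrix (Fin 2) (Fin 2) ℝ, M.IsSymm →
      |(A.trace / ∑ i, ∑ j, (A i j) ^ 2) * (∑ i, ∑ j, A i j * M i j) - M.trace|
        ≤ Real.sqrt (1 - ε) * Real.sqrt (∑ i, ∑ j, (M i j) ^ 2) :=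
  cordes_renormalization_estimate_general A ε hpos hCordes
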